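/- Let p > 2 and let φ : [0,∞) → [p-2,∞) satisfy p(1-1/p)^{p-1}(1+φ(s))^{p-2}(φ(s)-p+2) = s. Then φ(s) ≥ s^{1/(p-1)} for 0 ≤ s ≤ (p-1)^{p-1} and φ(s) < s^{1/(p-1)} for s > (p-1)^{p-1}. -/

import Mathlib

/-!
Write `F(u) = p (1 - 1/p)^(p-1) (1+u)^(p-2) (u-p+2)` (`phiInv p u` below), so that `F (φ s) = s`.
On `u > p - 2` the logarithm of `F(u) / u^(p-1)` is, up to a constant,
`(p-2) log(1+u) + log(u-p+2) - (p-1) log u`, whose derivative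
`(p-1)(p-2) / (u (1+u) (u-p+2))` is positive. Since `F(p-1) = (p-1)^(p-1)`, this gives
`F(u) ≤ u^(p-1) ↔ u ≤ p - 1`, and both claims follow by taking `u = φ s`.
-/

open Real Set

noncomputable section

namespace PhiBound

def phiInv (p u : ℝ) : ℝ :=
  p * (1 - 1 / p) ^ (p - 1) * (1 + u) ^ (p - 2) * (u - p + 2)

def logRatio (p u : ℝ) : ℝ :=
  (p - 2) * log (1 + u) + log (u - p + 2) - (p - 1) * log u

variable {p u : ℝ}

lemma hasDerivAt_logRatio (hu : p - 2 < u) (hu0 : 0 < u) :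
    HasDerivAt (logRatio p) ((p - 2) * (1 + u)⁻¹ + (u - p + 2)⁻¹ - (p - 1) * u⁻¹) u := by
  have hlog₁ : HasDerivAt (fun x => log (1 + x)) (1 + u)⁻¹ u := by
    simpa using ((hasDerivAt_id' u).const_add 1).log (by linarith)
  have hlog₂ : HasDerivAt (fun x => log (x - p + 2)) (u - p + 2)⁻¹ u := by
    simpa using (((hasDerivAt_id' u).sub_const p).add_const 2).log (by linarith)
  exact ((hlog₁.const_mul (p - 2)).add hlog₂).sub ((hasDerivAt_log hu0.ne').const_mul (p - 1))

lemma strictMonoOn_logRatio (hp : 2 < p) : StrictMonoOn (logRatio p) (Ioi (p - 2)) := by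
  refine strictMonoOn_of_deriv_pos (convex_Ioi _)
    (fun u hu => (hasDerivAt_logRatio hu (by simp at hu; linarith)).continuousAt.continuousWithinAt)
    fun u hu => ?_
  rw [interior_Ioi, mem_Ioi] at hu
  have hu0 : 0 < u := by linarith
  have hu₂ : 0 < u - p + 2 := by linarith
  have hderiv : (p - 2) * (1 + u)⁻¹ + (u - p + 2)⁻¹ - (p - 1) * u⁻¹
      = (p - 1) * (p - 2) / (u * (1 + u) * (u - p + 2)) := by
    field_simp
    ring
  rw [(hasDerivAt_logRatio hu hu0).deriv, hderiv]
  have : 0 < p - 2 := by linarith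
  have : 0 < p - 1 := by linarith
  positivity

lemma phiInv_pos (hp : 2 < p) (hu : p - 2 < u) : 0 < phiInv p u := by
  have hp0 : 0 < p := by linarith
  have : 0 < 1 - 1 / p := by rw [sub_pos, div_lt_one hp0]; linarith
  have : 0 < 1 + u := by linarith
  have : 0 < u - p + 2 := by linarith
  unfold phiInv
  positivity

/-- The constant `log p + (p-1) log (1 - 1/p)` equals `-logRatio p (p-1)`
because `F(p-1) = (p-1)^(p-1)`. -/
lemma log_phiInv_sub_log_rpow (hp : 2 < p) (hu : p - 2 < u) :
    log (phiInv p u) - log (u ^ (p - 1)) = logRatio p u - logRatio p (p - 1) := by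
  have hp0 : 0 < p := by linarith
  have hu0 : 0 < u := by linarith
  have hq : 0 < (p - 1) / p := div_pos (by linarith) hp0
  have hc : 1 - 1 / p = (p - 1) / p := by field_simp
  have h₁ : 1 + (p - 1) = p := by ring
  have h₂ : p - 1 - p + 2 = 1 := by ring
  unfold phiInv logRatio
  rw [hc, h₁, h₂, log_one, log_mul (by positivity) (by linarith),
    log_mul (by positivity) (by positivity), log_mul hp0.ne' (by positivity),
    log_rpow hq, log_rpow (by linarith), log_rpow hu0, log_div (by linarith) hp0.ne']
  ring

theorem phiInv_le_rpow_iff (hp : 2 < p) (hu : p - 2 ≤ u) :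
    phiInv p u ≤ u ^ (p - 1) ↔ u ≤ p - 1 := by
  rcases hu.eq_or_lt with rfl | hu
  · have hzero : p - 2 - p + 2 = 0 := by ring
    rw [phiInv, hzero, mul_zero]
    exact iff_of_true (by positivity) (by linarith)
  have hu0 : 0 < u := by linarith
  rw [← log_le_log_iff (phiInv_pos hp hu) (by positivity), ← sub_nonpos,
    log_phiInv_sub_log_rpow hp hu, sub_nonpos]
  exact (strictMonoOn_logRatio hp).le_iff_le hu (by rw [mem_Ioi]; linarith)

end PhiBound

open PhiBound in
theorem stmt_6 (p : ℝ) (hp : 2 < p) (φ : ℝ → ℝ)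
    (hφ0 : ∀ s, 0 ≤ s → p - 2 ≤ φ s)
    (hφ : ∀ s, 0 ≤ s →
      p * (1 - 1 / p) ^ (p - 1) * (1 + φ s) ^ (p - 2) * (φ s - p + 2) = s) :
    (∀ s, 0 ≤ s → s ≤ (p - 1) ^ (p - 1) → s ^ (1 / (p - 1)) ≤ φ s) ∧
    (∀ s, (p - 1) ^ (p - 1) < s → φ s < s ^ (1 / (p - 1))) := by
  have hp1 : 0 < p - 1 := by linarith
  have key : ∀ s, 0 ≤ s → (s ≤ φ s ^ (p - 1) ↔ φ s ≤ p - 1) := fun s hs => by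
    rw [← phiInv_le_rpow_iff hp (hφ0 s hs), phiInv, hφ s hs]
  have rpow_le_iff : ∀ s, 0 ≤ s → (φ s ^ (p - 1) ≤ (p - 1) ^ (p - 1) ↔ φ s ≤ p - 1) :=
    fun s hs => rpow_le_rpow_iff (by linarith [hφ0 s hs]) hp1.le hp1
  rw [one_div]
  constructor
  · intro s hs hs_le
    rw [rpow_inv_le_iff_of_pos hs (by linarith [hφ0 s hs]) hp1, key s hs]
    by_contra! hgt
    have h_above_phi : ¬ s ≤ φ s ^ (p - 1) := (key s hs).not.mpr hgt.not_ge
    have h_above_bound : ¬ φ s ^ (p - 1) ≤ (p - 1) ^ (p - 1) :=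
      (rpow_le_iff s hs).not.mpr hgt.not_ge
    linarith
  · intro s hs_gt
    have hs : 0 ≤ s := (rpow_nonneg hp1.le _).trans hs_gt.le
    rw [lt_rpow_inv_iff_of_pos (by linarith [hφ0 s hs]) hs hp1, lt_iff_not_ge, key s hs]
    intro hle
    linarith [(key s hs).mpr hle, (rpow_le_iff s hs).mpr hle]
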